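/- Let a, c : ℕ → ℝ, define b n = ∑_{k=0}^n C(n,k) a k and suppose c n = ∑_{k=0}^n C(n,k) d k for a sequence d. Then ∑_{k=0}^n C(n,k) * a k * c k = ∑_{m=0}^n C(n,m) * d m * ∇^m b n. -/

import Mathlib

/-!
The backward difference `∇^m b n` is the forward difference `Δ^m b (n - m)`, and by Pascal's rule
`Δ` acts on a binomial transform by shifting the transformed sequence: `Δ (T a) = T (a ∘ succ)`.
So `∇^m b n = T (a (· + m)) (n - m)`, and both sides of the identity become the double sum of
`C(n,k) C(k,m) a k d m = C(n,m) C(n-m,k-m) a k d m` over `m ≤ k ≤ n`.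
-/

open Finset fwdDiff

variable {R : Type*}

def binomialTransform [Ring R] (a : ℕ → R) (n : ℕ) : R :=
  ∑ k ∈ range (n + 1), (n.choose k : R) * a k

section Ring

variable [Ring R]

theorem fwdDiff_binomialTransform (a : ℕ → R) :
    Δ_[1] (binomialTransform a) = binomialTransform (fun k ↦ a (k + 1)) := by
  ext x
  have hpascal : binomialTransform a (x + 1) = a 0 +
      ∑ k ∈ range (x + 1), ((x.choose k : R) * a (k + 1) + (x.choose (k + 1) : R) * a (k + 1)) := by
    rw [binomialTransform, sum_range_succ']
    simp [Nat.choose_succ_succ, add_mul, add_comm]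
  have hshift : binomialTransform a x = a 0 +
      ∑ k ∈ range (x + 1), (x.choose (k + 1) : R) * a (k + 1) := by
    rw [binomialTransform, sum_range_succ', sum_range_succ (fun k ↦ (x.choose (k + 1) : R) * _)]
    simp [add_comm]
  rw [fwdDiff, hpascal, hshift, sum_add_distrib, binomialTransform]
  abel

theorem fwdDiff_iter_binomialTransform (a : ℕ → R) (m : ℕ) :
    Δ_[1] ^[m] (binomialTransform a) = binomialTransform (fun k ↦ a (k + m)) := by
  induction m with
  | zero => rfl
  | succ m ih =>
    rw [Function.iterate_succ_apply', ih, fwdDiff_binomialTransform]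
    simp only [add_assoc, add_comm 1 m]

theorem sum_neg_one_pow_mul_choose_mul_sub_eq_fwdDiff_iter (f : ℕ → R) {m n : ℕ} (hmn : m ≤ n) :
    ∑ i ∈ range (m + 1), (-1 : R) ^ i * (m.choose i : R) * f (n - i) = Δ_[1] ^[m] f (n - m) := by
  rw [fwdDiff_iter_eq_sum_shift, ← sum_range_reflect]
  refine sum_congr rfl fun i hi ↦ ?_
  have him : i ≤ m := Nat.lt_succ_iff.mp (mem_range.mp hi)
  rw [show m + 1 - 1 - i = m - i by omega, Nat.choose_symm him,
    show n - (m - i) = n - m + i • 1 by simp; omega, zsmul_eq_mul]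
  push_cast
  noncomm_ring

end Ring

theorem sum_choose_mul_mul_binomialTransform [CommRing R] (a d : ℕ → R) (n : ℕ) :
    ∑ k ∈ range (n + 1), (n.choose k : R) * a k * binomialTransform d k =
      ∑ m ∈ range (n + 1), (n.choose m : R) * d m *
        binomialTransform (fun k ↦ a (k + m)) (n - m) := by
  set g : ℕ → ℕ → R := fun m k ↦ (n.choose m : R) * ((n - m).choose (k - m) : R) * (d m * a k)
  have hrow : ∀ m ∈ range (n + 1), (n.choose m : R) * d m *
      binomialTransform (fun k ↦ a (k + m)) (n - m) = ∑ k ∈ Ico m (n + 1), g m k := by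
    intro m hm
    rw [sum_Ico_eq_sum_range, show n + 1 - m = n - m + 1 by grind, binomialTransform, mul_sum]
    refine sum_congr rfl fun k _ ↦ ?_
    simp only [g, add_comm m k, Nat.add_sub_cancel]
    ring
  have hcol : ∀ k ∈ range (n + 1), (n.choose k : R) * a k * binomialTransform d k =
      ∑ m ∈ Ico 0 (k + 1), g m k := by
    intro k _
    rw [Nat.Ico_zero_eq_range, binomialTransform, mul_sum]
    refine sum_congr rfl fun m hm ↦ ?_
    have hmk : m ≤ k := Nat.lt_succ_iff.mp (mem_range.mp hm)
    have hchoose := congrArg (Nat.cast : ℕ → R) (Nat.choose_mul (n := n) hmk)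
    push_cast at hchoose
    simp only [g, ← hchoose]
    ring
  rw [sum_congr rfl hrow, sum_congr rfl hcol, ← Nat.Ico_zero_eq_range, sum_Ico_Ico_comm]

theorem stmt_2 (a b c d : ℕ → ℝ)
    (hb : ∀ n, b n = ∑ k ∈ Finset.range (n+1), (n.choose k : ℝ) * a k)
    (hc : ∀ n, c n = ∑ k ∈ Finset.range (n+1), (n.choose k : ℝ) * d k)
    (n : ℕ) :
    ∑ k ∈ Finset.range (n+1), (n.choose k : ℝ) * a k * c k =
      ∑ m ∈ Finset.range (n+1), (n.choose m : ℝ) * d m *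
        ∑ i ∈ Finset.range (m+1), (-1 : ℝ)^i * (m.choose i : ℝ) * b (n - i) := by
  obtain rfl : b = binomialTransform a := funext hb
  obtain rfl : c = binomialTransform d := funext hc
  rw [sum_choose_mul_mul_binomialTransform]
  refine sum_congr rfl fun m hm ↦ ?_
  rw [sum_neg_one_pow_mul_choose_mul_sub_eq_fwdDiff_iter _ (Nat.lt_succ_iff.mp (mem_range.mp hm)),
    fwdDiff_iter_binomialTransform]
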